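/- arXiv:2512.21260 — 7 statements merged into one kernel-verified Lean document; each statement's English description precedes it below -/
import Mathlib

section
/- Let n, d be positive integers. In the algebra of complex square matrices indexed by (Fin n → Fin d) (representing operators on (ℂ^d)^{⊗n}), the ℂ-linear span of the set {A^{⊗n} : A ∈ Matrix (Fin d) (Fin d) ℂ} of n-th Kronecker powers is equal to the commutant of the set of permutation matrices {P_σ : σ ∈ Equiv.Perm (Fin n)}, i.e., a matrix lies in this span if and only if it commutes with P_σ for every σ. (Schur–Weyl duality, underlying the simultaneous irreducible decomposition of U^{⊗n} and π(σ) used throughout the paper.) -/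
open Matrix

/-- The `n`-th Kronecker power of a `d × d` complex matrix, acting on `(ℂ^d)^{⊗n}`,
indexed by `Fin n → Fin d`. -/
noncomputable def kroneckerPower {d : ℕ} (n : ℕ) (A : Matrix (Fin d) (Fin d) ℂ) :
    Matrix (Fin n → Fin d) (Fin n → Fin d) ℂ :=
  fun f g => ∏ k : Fin n, A (f k) (g k)

/-- The permutation matrix on `(ℂ^d)^{⊗n}` permuting tensor factors according to `σ`. -/
noncomputable def permMatrix (n d : ℕ) (σ : Equiv.Perm (Fin n)) :
    Matrix (Fin n → Fin d) (Fin n → Fin d) ℂ :=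
  fun f g => if f = g ∘ ⇑σ⁻¹ then 1 else 0

/-!
Permuting the tensor factors only reorders the product `∏ k, A (f k) (g k)`, so Kronecker powers
commute with every `P_σ`. Conversely, `X` commutes with every `P_σ` iff its entries are invariant
under `(f, g) ↦ (f ∘ σ, g ∘ σ)`; averaging over `σ` then writes `n! • X` as a combination of the
symmetrised matrix units `∑ σ, E (f ∘ σ) (g ∘ σ)`. Such a unit is the symmetrised Kronecker product
`∑ σ, ⨂ k, E (f (σ k)) (g (σ k))`, and polarisation in the form of Ryser's inclusion–exclusion
formula for the permanent expresses it as `∑ S, (-1) ^ #Sᶜ • (∑ i ∈ S, E (f i) (g i)) ^ ⊗n`.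
-/

open Finset Equiv

theorem Finset.sum_ite_subset_neg_one_pow_card_compl {R ι : Type*} [CommRing R] [Fintype ι]
    [DecidableEq ι] (B : Finset ι) :
    ∑ S : Finset ι, (if B ⊆ S then (-1 : R) ^ #Sᶜ else 0) = if B = univ then 1 else 0 := by
  rw [← Fintype.sum_equiv (compl_involutive.toPerm _)
      (fun T => if T ⊆ Bᶜ then (-1 : R) ^ #T else 0) _ (fun S => by simp [subset_compl_comm]),
    ← sum_filter, show univ.filter (· ⊆ Bᶜ) = Bᶜ.powerset by ext; simp]
  have h := congrArg (Int.cast : ℤ → R) (sum_powerset_neg_one_pow_card (x := Bᶜ))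
  push_cast at h
  simpa [compl_eq_empty_iff] using h

theorem Fintype.sum_perm_eq_sum_surjective {ι M : Type*} [Fintype ι] [DecidableEq ι]
    [AddCommMonoid M] (p : (ι → ι) → M) :
    ∑ σ : Perm ι, p σ = ∑ φ : ι → ι, if Function.Surjective φ then p φ else 0 := by
  rw [← sum_filter]
  refine (sum_map univ ⟨_, DFunLike.coe_injective⟩ p).symm.trans
    (Finset.sum_congr ?_ fun _ _ => rfl)
  ext φ
  simp only [mem_map, mem_univ, true_and, mem_filter, Function.Embedding.coeFn_mk]
  refine ⟨?_, fun h => ⟨Equiv.ofBijective φ ⟨Finite.injective_iff_surjective.2 h, h⟩, rfl⟩⟩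
  rintro ⟨σ, rfl⟩
  exact σ.surjective

namespace Matrix

variable {R ι m n : Type*}

theorem permanent_eq_ryser [CommRing R] [Fintype ι] [DecidableEq ι] (M : Matrix ι ι R) :
    M.permanent = ∑ S : Finset ι, (-1) ^ #Sᶜ * ∏ i, ∑ j ∈ S, M j i := by
  have hexpand (S : Finset ι) : ∏ i, ∑ j ∈ S, M j i =
      ∑ φ : ι → ι, if univ.image φ ⊆ S then ∏ i, M (φ i) i else 0 := by
    rw [prod_univ_sum, ← sum_filter]
    congr 1
    ext φ
    simp [image_subset_iff]
  calc M.permanent = ∑ φ : ι → ι, if Function.Surjective φ then ∏ i, M (φ i) i else 0 :=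
        Fintype.sum_perm_eq_sum_surjective (fun φ => ∏ i, M (φ i) i)
    _ = ∑ φ : ι → ι, (∏ i, M (φ i) i) *
          ∑ S : Finset ι, if univ.image φ ⊆ S then (-1 : R) ^ #Sᶜ else 0 := by
        refine sum_congr rfl fun φ _ => ?_
        rw [sum_ite_subset_neg_one_pow_card_compl, mul_ite, mul_one, mul_zero]
        congr 1
        simp [eq_univ_iff_forall, Function.Surjective]
    _ = _ := by
        simp_rw [hexpand, mul_sum, mul_ite, mul_zero]
        rw [sum_comm]
        simp_rw [mul_comm]

def kroneckerProd [CommSemiring R] [Fintype ι] (A : ι → Matrix m n R) :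
    Matrix (ι → m) (ι → n) R :=
  of fun f g => ∏ k, A k (f k) (g k)

theorem kroneckerProd_single [CommSemiring R] [Fintype ι] [DecidableEq m] [DecidableEq n]
    (a : ι → m) (b : ι → n) :
    kroneckerProd (fun k => single (a k) (b k) (1 : R)) = single a b 1 := by
  ext f g
  simp [kroneckerProd, single_apply, prod_boole, funext_iff, forall_and]

theorem sum_neg_one_pow_smul_kroneckerProd_sum [CommRing R] [Fintype ι] [DecidableEq ι]
    (A : ι → Matrix m n R) :
    ∑ S : Finset ι, (-1 : R) ^ #Sᶜ • kroneckerProd (fun _ : ι => ∑ i ∈ S, A i) =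
      ∑ σ : Perm ι, kroneckerProd (fun k => A (σ k)) := by
  ext f g
  simp only [sum_apply, smul_apply, kroneckerProd, of_apply, smul_eq_mul]
  exact (permanent_eq_ryser (of fun j k => A j (f k) (g k))).symm

theorem card_smul_eq_sum_smul_sum_single [Semiring R] [Fintype m] [Fintype n] [DecidableEq m]
    [DecidableEq n] {G : Type*} [Fintype G] (ρ : G → Perm m) (τ : G → Perm n) (X : Matrix m n R)
    (hX : ∀ g i j, X (ρ g i) (τ g j) = X i j) :
    Fintype.card G • X = ∑ i, ∑ j, X i j • ∑ g, single (ρ g i) (τ g j) (1 : R) := by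
  have hg (g : G) : ∑ i, ∑ j, single (ρ g i) (τ g j) (X i j) = X := by
    calc ∑ i, ∑ j, single (ρ g i) (τ g j) (X i j)
        = ∑ i, ∑ j, single (ρ g i) (τ g j) (X (ρ g i) (τ g j)) := by
          refine sum_congr rfl fun i _ => sum_congr rfl fun j _ => ?_
          rw [hX]
      _ = ∑ i, ∑ j, single i j (X i j) := by
        rw [Equiv.sum_comp (ρ g) (fun i => ∑ j, single i (τ g j) (X i (τ g j)))]
        exact sum_congr rfl fun i _ => Equiv.sum_comp (τ g) (fun j => single i j (X i j))
      _ = X := (matrix_eq_sum_single X).symm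
  calc Fintype.card G • X = ∑ g, ∑ i, ∑ j, single (ρ g i) (τ g j) (X i j) := by
        rw [← card_univ, ← sum_const]
        exact sum_congr rfl fun g _ => (hg g).symm
    _ = ∑ i, ∑ j, X i j • ∑ g, single (ρ g i) (τ g j) (1 : R) := by
        simp_rw [smul_sum, smul_single, smul_eq_mul, mul_one]
        rw [sum_comm]
        exact sum_congr rfl fun i _ => sum_comm

theorem mul_permMatrix_eq_permMatrix_mul_iff [Semiring R] [Fintype m] [DecidableEq m]
    (e : Perm m) (X : Matrix m m R) :
    X * e.permMatrix R = e.permMatrix R * X ↔ ∀ i j, X (e i) (e j) = X i j := by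
  rw [PEquiv.mul_toMatrix_toPEquiv, PEquiv.toMatrix_toPEquiv_mul]
  refine Matrix.ext_iff.symm.trans (forall_congr' fun i => ?_)
  rw [← e.forall_congr_right]
  simp [eq_comm]

end Matrix

section SchurWeyl

variable {n d : ℕ}

def tensorFactorPerm (d : ℕ) (σ : Perm (Fin n)) : Perm (Fin n → Fin d) :=
  σ.symm.arrowCongr (Equiv.refl (Fin d))

@[simp]
theorem tensorFactorPerm_apply (σ : Perm (Fin n)) (f : Fin n → Fin d) :
    tensorFactorPerm d σ f = f ∘ σ :=
  rfl

theorem permMatrix_eq_permMatrix_tensorFactorPerm (σ : Perm (Fin n)) :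
    permMatrix n d σ = (tensorFactorPerm d σ).permMatrix ℂ := by
  ext f g
  simp [permMatrix, PEquiv.toMatrix_apply, Equiv.eq_comp_symm]

theorem mul_permMatrix_eq_permMatrix_mul_iff (σ : Perm (Fin n))
    (X : Matrix (Fin n → Fin d) (Fin n → Fin d) ℂ) :
    X * permMatrix n d σ = permMatrix n d σ * X ↔ ∀ f g, X (f ∘ σ) (g ∘ σ) = X f g := by
  simp [permMatrix_eq_permMatrix_tensorFactorPerm, Matrix.mul_permMatrix_eq_permMatrix_mul_iff]

theorem kroneckerPower_mul_permMatrix (A : Matrix (Fin d) (Fin d) ℂ) (σ : Perm (Fin n)) :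
    kroneckerPower n A * permMatrix n d σ = permMatrix n d σ * kroneckerPower n A :=
  (mul_permMatrix_eq_permMatrix_mul_iff σ _).2 fun f g => prod_comp σ fun k => A (f k) (g k)

theorem sum_perm_single_mem_span_kroneckerPower (f₀ g₀ : Fin n → Fin d) :
    ∑ σ : Perm (Fin n), single (f₀ ∘ σ) (g₀ ∘ σ) (1 : ℂ) ∈
      Submodule.span ℂ {M | ∃ A : Matrix (Fin d) (Fin d) ℂ, M = kroneckerPower n A} := by
  have hpolar := sum_neg_one_pow_smul_kroneckerProd_sum fun i => single (f₀ i) (g₀ i) (1 : ℂ)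
  simp only [kroneckerProd_single] at hpolar
  simp only [Function.comp_def]
  rw [← hpolar]
  exact Submodule.sum_mem _ fun S _ => Submodule.smul_mem _ _ (Submodule.subset_span ⟨_, rfl⟩)

theorem mem_span_kroneckerPower_of_forall_apply_comp_perm
    {X : Matrix (Fin n → Fin d) (Fin n → Fin d) ℂ}
    (hX : ∀ σ : Perm (Fin n), ∀ f g, X (f ∘ σ) (g ∘ σ) = X f g) :
    X ∈ Submodule.span ℂ {M | ∃ A : Matrix (Fin d) (Fin d) ℂ, M = kroneckerPower n A} := by
  have hsymm := card_smul_eq_sum_smul_sum_single (tensorFactorPerm d) (tensorFactorPerm d) X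
    (by simpa using hX)
  rw [← Submodule.smul_mem_iff _ (Nat.cast_ne_zero.2 Fintype.card_ne_zero :
    (Fintype.card (Perm (Fin n)) : ℂ) ≠ 0), Nat.cast_smul_eq_nsmul, hsymm]
  simp only [tensorFactorPerm_apply]
  exact Submodule.sum_mem _ fun f₀ _ => Submodule.sum_mem _ fun g₀ _ =>
    Submodule.smul_mem _ _ (sum_perm_single_mem_span_kroneckerPower f₀ g₀)

end SchurWeyl

theorem stmt0_general (n d : ℕ) :
    (Submodule.span ℂ {M : Matrix (Fin n → Fin d) (Fin n → Fin d) ℂ |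
        ∃ A : Matrix (Fin d) (Fin d) ℂ, M = kroneckerPower n A} : Set _) =
      {X : Matrix (Fin n → Fin d) (Fin n → Fin d) ℂ |
        ∀ σ : Equiv.Perm (Fin n), X * permMatrix n d σ = permMatrix n d σ * X} := by
  ext X
  constructor
  · intro hX σ
    have hcomm : X ∈ (Subalgebra.centralizer ℂ (Set.range (permMatrix n d))).toSubmodule := by
      refine Submodule.span_le.2 ?_ hX
      rintro _ ⟨A, rfl⟩ _ ⟨σ, rfl⟩
      exact (kroneckerPower_mul_permMatrix A σ).symm
    exact (hcomm _ ⟨σ, rfl⟩).symm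
  · intro hX
    exact mem_span_kroneckerPower_of_forall_apply_comp_perm fun σ =>
      (mul_permMatrix_eq_permMatrix_mul_iff σ X).1 (hX σ)

/-- Schur–Weyl duality: the span of `n`-th Kronecker powers equals the commutant of the
permutation matrices. -/
theorem stmt0 (n d : ℕ) (hn : 0 < n) (hd : 0 < d) :
    (Submodule.span ℂ {M : Matrix (Fin n → Fin d) (Fin n → Fin d) ℂ |
        ∃ A : Matrix (Fin d) (Fin d) ℂ, M = kroneckerPower n A} : Set _) =
      {X : Matrix (Fin n → Fin d) (Fin n → Fin d) ℂ |
        ∀ σ : Equiv.Perm (Fin n), X * permMatrix n d σ = permMatrix n d σ * X} :=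
  stmt0_general n d
end

section
/- Let n, d be positive integers. In the algebra of complex square matrices indexed by (Fin n → Fin d), the ℂ-linear span of the permutation matrices {P_σ : σ ∈ Equiv.Perm (Fin n)} is equal to the commutant of the set {U^{⊗n} : U ∈ unitaryGroup (Fin d) ℂ} of n-th Kronecker powers of unitary matrices, i.e., a matrix commutes with U^{⊗n} for every unitary U if and only if it is a ℂ-linear combination of permutation matrices. (Dual direction of Schur–Weyl duality.) -/
open Matrix

/-!
The span of the `P_σ` is the image of the group algebra `ℂ[S_n]`, which is semisimple by
Maschke's theorem, so by the Jacobson density theorem it is its own double commutant; since the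
`P_σ` commute with every `A^{⊗n}`, it suffices to show that a matrix `X` commuting with the
`U^{⊗n}` commutes with every `Y` commuting with all `P_σ`.

Averaging over conjugation by `S_n` and expanding in matrix units writes such a `Y` as a
combination of symmetrised tensors `∑_σ B_{σ 1} ⊗ ⋯ ⊗ B_{σ n}`, and Ryser's formula for the
permanent writes each of these as a combination of Kronecker powers `(∑_{j ∉ T} B_j)^{⊗n}`.

It remains to see that `X` commutes with `A^{⊗n}` for every `A`, not only for unitary `A`. An
invertible `A` is `U diag(e^μ) V` with `U`, `V` unitary; the entries of the commutator of `X` with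
`(U diag(e^{zμ}) V)^{⊗n}` are entire in `z` and vanish on the imaginary axis, where the matrix is
unitary, hence also at `z = 1`. A general `A` is the limit of the invertible `A + z`, `z → 0`,
and the same identity-theorem argument applies.
-/

section

open Finset Filter Topology Complex
open scoped ComplexOrder

theorem Matrix.permanent_eq_sum_neg_one_pow {ι R : Type*} [Fintype ι] [DecidableEq ι]
    [CommRing R] (M : Matrix ι ι R) :
    M.permanent = ∑ T : Finset ι, (-1) ^ #T * ∏ i, ∑ j ∈ Tᶜ, M j i := by
  have hinner : ∀ h : ι → ι, (∑ T : Finset ι, if ∀ i, h i ∈ Tᶜ then (-1 : R) ^ #T else 0)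
      = if Function.Bijective h then 1 else 0 := by
    intro h
    have hmem : ∀ T : Finset ι, (∀ i, h i ∈ Tᶜ) ↔ T ∈ (univ.image h)ᶜ.powerset := by
      intro T; simp only [mem_compl, mem_powerset, subset_iff, mem_image, mem_univ, true_and]
      grind
    simp_rw [hmem, ← Finset.sum_filter, Finset.filter_mem_eq_inter, Finset.univ_inter]
    have := congrArg (Int.cast : ℤ → R) (sum_powerset_neg_one_pow_card (x := (univ.image h)ᶜ))
    push_cast at this
    rw [this]
    refine if_congr ?_ rfl rfl
    rw [compl_eq_empty_iff, eq_univ_iff_forall, ← Finite.surjective_iff_bijective]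
    simp only [mem_image, mem_univ, true_and]
    rfl
  calc M.permanent = ∑ h : ι → ι, (if Function.Bijective h then 1 else 0) * ∏ i, M (h i) i := by
        simp only [boole_mul, ← Finset.sum_filter]
        rw [Finset.sum_subtype (p := Function.Bijective) _
          (fun h => by simp only [mem_filter, mem_univ, true_and])]
        exact Fintype.sum_equiv Equiv.bijectiveEquiv.symm _ _ fun σ => rfl
    _ = _ := by
        simp_rw [← hinner, Finset.sum_mul, Finset.prod_univ_sum]
        rw [Finset.sum_comm]
        refine Finset.sum_congr rfl fun T _ => ?_
        rw [Finset.mul_sum, ← Fintype.piFinset_univ]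
        simp only [ite_mul, zero_mul, ← Finset.sum_filter]
        congr 1
        ext h
        simp [Fintype.mem_piFinset]

open Representation MonoidAlgebra in
theorem Representation.mem_span_range_of_forall_commute {k G V : Type*} [Field k] [Group G]
    [Finite G] [NeZero (Nat.card G : k)] [AddCommGroup V] [Module k V] [Module.Finite k V]
    (ρ : Representation k G V) (f : Module.End k V)
    (hf : ∀ T : Module.End k V, (∀ g, Commute (ρ g) T) → Commute f T) :
    f ∈ Submodule.span k (Set.range ρ) := by
  classical
  -- `f` is `k[G]`-bicommutant: it commutes with every `k[G]`-linear endomorphism.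
  let F : Module.End (Module.End k[G] ρ.asModule) ρ.asModule :=
    { toFun := fun m => ρ.asModuleEquiv.symm (f (ρ.asModuleEquiv m))
      map_add' := by simp
      map_smul' := fun T m => by
        let T' : Module.End k V :=
          ρ.asModuleEquiv.toLinearMap ∘ₗ T.restrictScalars k ∘ₗ ρ.asModuleEquiv.symm.toLinearMap
        have hT' : ∀ g, Commute (ρ g) T' := fun g => by
          ext v
          have h := T.map_smul (MonoidAlgebra.of k G g) (ρ.asModuleEquiv.symm v)
          rw [← asModuleEquiv_symm_map_rho] at h
          change ρ g (ρ.asModuleEquiv (T (ρ.asModuleEquiv.symm v)))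
            = ρ.asModuleEquiv (T (ρ.asModuleEquiv.symm (ρ g v)))
          rw [h, asModuleEquiv_map_smul, asAlgebraHom_of]
        exact ρ.asModuleEquiv.injective
          (by simpa [T'] using LinearMap.congr_fun (hf T' hT').eq (ρ.asModuleEquiv m)) }
  obtain ⟨s, hs⟩ := Module.Finite.fg_top (R := k) (M := V)
  obtain ⟨r, hr⟩ := jacobson_density F (s.image ρ.asModuleEquiv.symm)
  have hfr : f = ρ.asAlgebraHom r := by
    refine LinearMap.ext_on hs fun v hv => ?_
    have := hr (ρ.asModuleEquiv.symm v) (Finset.mem_image_of_mem _ hv)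
    simpa [F] using congrArg ρ.asModuleEquiv this
  rw [hfr, asAlgebraHom_def, MonoidAlgebra.lift_apply]
  exact Submodule.sum_mem _ fun g _ => Submodule.smul_mem _ _ (Submodule.subset_span ⟨g, rfl⟩)

theorem Matrix.mem_span_range_of_forall_commute {k G ι : Type*} [Field k] [Group G] [Finite G]
    [NeZero (Nat.card G : k)] [Fintype ι] [DecidableEq ι] (ρ : G →* Matrix ι ι k)
    (X : Matrix ι ι k) (hX : ∀ Y : Matrix ι ι k, (∀ g, Commute (ρ g) Y) → Commute X Y) :
    X ∈ Submodule.span k (Set.range ρ) := by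
  let e : Matrix ι ι k ≃ₐ[k] Module.End k (ι → k) := Matrix.toLinAlgEquiv'
  have h := Representation.mem_span_range_of_forall_commute ((e : Matrix ι ι k →* _).comp ρ) (e X)
    fun T hT => by simpa using (hX (e.symm T) fun g => by simpa using (hT g).map e.symm).map e
  rw [MonoidHom.coe_comp, Set.range_comp, MonoidHom.coe_coe, ← AlgEquiv.coe_toLinearEquiv,
    ← LinearEquiv.coe_toLinearMap, Submodule.span_image, Submodule.mem_map_equiv] at h
  simpa using h

theorem Complex.frequently_nhdsNE_zero_of_forall_ofReal_mul_I {p : ℂ → Prop}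
    (h : ∀ t : ℝ, p (t * I)) : ∃ᶠ z in 𝓝[≠] (0 : ℂ), p z := by
  have hcont : Tendsto (fun t : ℝ => (t : ℂ) * I) (𝓝 0) (𝓝 0) :=
    (continuous_ofReal.mul continuous_const).tendsto' 0 0 (by simp)
  have hne : Tendsto (fun t : ℝ => (t : ℂ) * I) (𝓝[≠] 0) (𝓝[≠] 0) :=
    tendsto_nhdsWithin_of_tendsto_nhds_of_eventually_within _
      (hcont.mono_left nhdsWithin_le_nhds)
      (eventually_nhdsWithin_of_forall fun t ht => by simpa using ht)
  exact hne.frequently (Frequently.of_forall h)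

theorem Matrix.eventually_isUnit_add_smul_one {K m : Type*} [Field K] [TopologicalSpace K]
    [T1Space K] [Fintype m] [DecidableEq m] (A : Matrix m m K) (z₀ : K) :
    ∀ᶠ z in 𝓝[≠] z₀, IsUnit (A + z • (1 : Matrix m m K)) := by
  have hroots : {z | (-A).charpoly.IsRoot z}.Finite :=
    Polynomial.finite_setOfPred_isRoot (charpoly_monic _).ne_zero
  filter_upwards [nhdsNE_le_cofinite z₀ hroots.compl_mem_cofinite] with z hz
  rw [isUnit_iff_isUnit_det, isUnit_iff_ne_zero]
  simpa [Polynomial.IsRoot, eval_charpoly, scalar_apply, smul_one_eq_diagonal, add_comm] using hz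

theorem Matrix.diagonal_exp_mem_unitaryGroup {m : Type*} [Fintype m] [DecidableEq m]
    (μ : m → ℝ) (t : ℝ) : diagonal (fun i => cexp (t * I * μ i)) ∈ unitaryGroup m ℂ := by
  rw [mem_unitaryGroup_iff, star_eq_conjTranspose, diagonal_conjTranspose, diagonal_mul_diagonal,
    ← diagonal_one]
  congr 1
  ext i
  rw [Pi.star_apply, star_def, ← Complex.exp_conj, ← Complex.exp_add, ← Complex.exp_zero]
  simp

theorem Matrix.exists_unitary_mul_diagonal_exp_mul_unitary {m : Type*} [Fintype m]
    [DecidableEq m] {A : Matrix m m ℂ} (hA : IsUnit A) :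
    ∃ U ∈ unitaryGroup m ℂ, ∃ V ∈ unitaryGroup m ℂ, ∃ μ : m → ℝ,
      A = U * diagonal (fun i => cexp (μ i)) * V := by
  have hH : (Aᴴ * A).PosDef := PosDef.conjTranspose_mul_self A
    ((mulVec_injective_iff_isUnit).mpr hA)
  set W := hH.1.eigenvectorUnitary
  set μ : m → ℝ := fun i => Real.log (hH.1.eigenvalues i) / 2
  have hdiag := hH.1.conjStarAlgAut_star_eigenvectorUnitary
  rw [Unitary.conjStarAlgAut_apply, Unitary.coe_star, star_star] at hdiag
  -- `A W e^{-μ}` is unitary because `Wᴴ (Aᴴ A) W = e^{2μ}`.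
  have hexp : ∀ i, cexp (-μ i) * (hH.1.eigenvalues i : ℂ) * cexp (-μ i) = 1 := fun i => by
    have hsq : cexp (μ i) * cexp (μ i) = hH.1.eigenvalues i := by
      rw [← Complex.exp_add, ← ofReal_add, add_halves, ← ofReal_exp,
        Real.exp_log (hH.eigenvalues_pos i)]
    rw [← hsq, Complex.exp_neg]
    field_simp
  have hDstar : star (diagonal fun i => cexp (-μ i)) = diagonal fun i => cexp (-μ i) := by
    rw [star_eq_conjTranspose, diagonal_conjTranspose]
    congr 1
    ext i
    simp [← Complex.exp_conj]
  refine ⟨A * W * diagonal (fun i => cexp (-μ i)), ?_, star W, (star W).2, μ, ?_⟩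
  · rw [mem_unitaryGroup_iff', star_mul, star_mul, hDstar, star_eq_conjTranspose A]
    calc _ = diagonal (fun i => cexp (-μ i)) * (star (W : Matrix m m ℂ) * (Aᴴ * A) * W) *
          diagonal (fun i => cexp (-μ i)) := by noncomm_ring
      _ = 1 := by
          rw [hdiag, diagonal_mul_diagonal, diagonal_mul_diagonal, ← diagonal_one]
          exact congrArg diagonal (funext hexp)
  · symm
    calc A * W * diagonal (fun i => cexp (-μ i)) * diagonal (fun i => cexp (μ i)) * star W
        = A * W * (diagonal (fun i => cexp (-μ i)) * diagonal (fun i => cexp (μ i))) * star W := by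
          simp only [mul_assoc]
      _ = A := by
          simp [diagonal_mul_diagonal, ← Complex.exp_add, mul_assoc]

end

section

open Finset Filter Topology Complex

variable {n d : ℕ}

noncomputable def kroneckerPi (B : Fin n → Matrix (Fin d) (Fin d) ℂ) :
    Matrix (Fin n → Fin d) (Fin n → Fin d) ℂ :=
  fun f g => ∏ k, B k (f k) (g k)

theorem permMatrix_apply_eq_ite (σ : Equiv.Perm (Fin n)) (f g : Fin n → Fin d) :
    permMatrix n d σ f g = if g = f ∘ σ then 1 else 0 := by
  refine if_congr ⟨fun h => ?_, fun h => ?_⟩ rfl rfl <;> ext k <;> simp [h]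

theorem permMatrix_mul_apply (σ : Equiv.Perm (Fin n))
    (M : Matrix (Fin n → Fin d) (Fin n → Fin d) ℂ) (f g : Fin n → Fin d) :
    (permMatrix n d σ * M) f g = M (f ∘ σ) g := by
  simp [mul_apply, permMatrix_apply_eq_ite]

theorem mul_permMatrix_apply (σ : Equiv.Perm (Fin n))
    (M : Matrix (Fin n → Fin d) (Fin n → Fin d) ℂ) (f g : Fin n → Fin d) :
    (M * permMatrix n d σ) f g = M f (g ∘ ⇑σ⁻¹) := by
  simp [mul_apply, permMatrix]

theorem permMatrix_one : permMatrix n d 1 = 1 := by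
  ext f g
  simp [permMatrix, one_apply]

theorem permMatrix_mul (σ τ : Equiv.Perm (Fin n)) :
    permMatrix n d (σ * τ) = permMatrix n d σ * permMatrix n d τ := by
  ext f g
  rw [permMatrix_mul_apply, permMatrix_apply_eq_ite, permMatrix_apply_eq_ite]
  rfl

noncomputable def permMatrixRep (n d : ℕ) :
    Equiv.Perm (Fin n) →* Matrix (Fin n → Fin d) (Fin n → Fin d) ℂ where
  toFun := permMatrix n d
  map_one' := permMatrix_one
  map_mul' := permMatrix_mul

theorem permMatrix_inv_mul_kroneckerPi_mul_permMatrix (σ : Equiv.Perm (Fin n))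
    (B : Fin n → Matrix (Fin d) (Fin d) ℂ) :
    permMatrix n d σ⁻¹ * kroneckerPi B * permMatrix n d σ = kroneckerPi (B ∘ σ) := by
  ext f g
  rw [mul_permMatrix_apply, permMatrix_mul_apply]
  simpa [kroneckerPi] using Equiv.prod_comp σ⁻¹ fun k => B (σ k) (f k) (g k)

theorem permMatrix_commute_kroneckerPower (σ : Equiv.Perm (Fin n))
    (A : Matrix (Fin d) (Fin d) ℂ) : Commute (permMatrix n d σ) (kroneckerPower n A) := by
  have h : permMatrix n d σ⁻¹ * kroneckerPower n A * permMatrix n d σ = kroneckerPower n A :=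
    permMatrix_inv_mul_kroneckerPi_mul_permMatrix σ fun _ => A
  calc permMatrix n d σ * kroneckerPower n A
      = permMatrix n d σ * (permMatrix n d σ⁻¹ * kroneckerPower n A * permMatrix n d σ) := by
        rw [h]
    _ = kroneckerPower n A * permMatrix n d σ := by
        rw [← mul_assoc, ← mul_assoc, ← permMatrix_mul, mul_inv_cancel, permMatrix_one, one_mul]

theorem sum_perm_kroneckerPi (B : Fin n → Matrix (Fin d) (Fin d) ℂ) :
    ∑ σ : Equiv.Perm (Fin n), kroneckerPi (B ∘ σ) =
      ∑ T : Finset (Fin n), (-1 : ℂ) ^ #T • kroneckerPower n (∑ j ∈ Tᶜ, B j) := by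
  ext f g
  simpa [kroneckerPi, kroneckerPower, Matrix.sum_apply, Matrix.permanent] using
    (Matrix.of fun j k => B j (f k) (g k)).permanent_eq_sum_neg_one_pow

theorem kroneckerPi_single_one (f g : Fin n → Fin d) :
    kroneckerPi (fun k => single (f k) (g k) (1 : ℂ)) = single f g 1 := by
  ext a b
  simp [kroneckerPi, single_apply, Fintype.prod_boole, funext_iff, forall_and]

theorem span_range_kroneckerPi :
    Submodule.span ℂ (Set.range (kroneckerPi (n := n) (d := d))) = ⊤ := by
  refine Submodule.eq_top_iff'.mpr fun Z => ?_
  rw [matrix_eq_sum_single Z]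
  refine Submodule.sum_mem _ fun f _ => Submodule.sum_mem _ fun g _ => ?_
  rw [← mul_one (Z f g), ← smul_eq_mul, ← smul_single, ← kroneckerPi_single_one]
  exact Submodule.smul_mem _ _ (Submodule.subset_span ⟨_, rfl⟩)

theorem sum_conj_permMatrix_mem_span_kroneckerPower
    (Z : Matrix (Fin n → Fin d) (Fin n → Fin d) ℂ) :
    ∑ σ, permMatrix n d σ⁻¹ * Z * permMatrix n d σ ∈
      Submodule.span ℂ (Set.range (kroneckerPower n)) := by
  have hZ : Z ∈ Submodule.span ℂ (Set.range kroneckerPi) := span_range_kroneckerPi ▸ trivial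
  induction hZ using Submodule.span_induction with
  | mem _ hB =>
    obtain ⟨B, rfl⟩ := hB
    simp_rw [permMatrix_inv_mul_kroneckerPi_mul_permMatrix, sum_perm_kroneckerPi]
    exact Submodule.sum_mem _ fun T _ => Submodule.smul_mem _ _ (Submodule.subset_span ⟨_, rfl⟩)
  | zero => simp
  | add Z₁ Z₂ _ _ h₁ h₂ => simpa only [mul_add, add_mul, sum_add_distrib] using add_mem h₁ h₂
  | smul c Z _ h => simpa only [mul_smul_comm, smul_mul_assoc, ← smul_sum] using
      Submodule.smul_mem _ c h

theorem mem_span_kroneckerPower_of_forall_commute_permMatrix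
    (Y : Matrix (Fin n → Fin d) (Fin n → Fin d) ℂ) (hY : ∀ σ, Commute (permMatrix n d σ) Y) :
    Y ∈ Submodule.span ℂ (Set.range (kroneckerPower n)) := by
  have hconj : ∀ σ, permMatrix n d σ⁻¹ * Y * permMatrix n d σ = Y := fun σ => by
    rw [mul_assoc, ← (hY σ).eq, ← mul_assoc, ← permMatrix_mul, inv_mul_cancel, permMatrix_one,
      one_mul]
  have h := sum_conj_permMatrix_mem_span_kroneckerPower Y
  simp_rw [hconj, sum_const, card_univ, ← Nat.cast_smul_eq_nsmul ℂ] at h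
  exact (Submodule.smul_mem_iff _ (Nat.cast_ne_zero.mpr Fintype.card_ne_zero)).mp h

theorem differentiable_kroneckerPower_apply {F : ℂ → Matrix (Fin d) (Fin d) ℂ}
    (hF : ∀ i j, Differentiable ℂ fun z => F z i j) (f g : Fin n → Fin d) :
    Differentiable ℂ fun z => kroneckerPower n (F z) f g :=
  Differentiable.fun_finsetProd fun k _ => hF (f k) (g k)

theorem commute_kroneckerPower_of_frequently (X : Matrix (Fin n → Fin d) (Fin n → Fin d) ℂ)
    {F : ℂ → Matrix (Fin d) (Fin d) ℂ} (hF : ∀ i j, Differentiable ℂ fun z => F z i j) {z₀ : ℂ}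
    (h : ∃ᶠ z in 𝓝[≠] z₀, Commute X (kroneckerPower n (F z))) (w : ℂ) :
    Commute X (kroneckerPower n (F w)) := by
  have hKP := differentiable_kroneckerPower_apply (n := n) hF
  ext f g
  have hφ : Differentiable ℂ fun z =>
      (X * kroneckerPower n (F z) - kroneckerPower n (F z) * X) f g := by
    simp only [Matrix.sub_apply, mul_apply]
    fun_prop
  have hφ' : AnalyticOnNhd ℂ _ Set.univ := fun z _ => hφ.analyticAt z
  have := hφ'.eqOn_zero_of_preconnected_of_frequently_eq_zero isPreconnected_univ
    (Set.mem_univ z₀) (h.mono fun z hz => by simp [hz.eq]) (Set.mem_univ w)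
  simpa [sub_eq_zero] using this

theorem commute_kroneckerPower_of_isUnit (X : Matrix (Fin n → Fin d) (Fin n → Fin d) ℂ)
    (hX : ∀ U ∈ unitaryGroup (Fin d) ℂ, Commute X (kroneckerPower n U))
    {A : Matrix (Fin d) (Fin d) ℂ} (hA : IsUnit A) : Commute X (kroneckerPower n A) := by
  obtain ⟨U, hU, V, hV, μ, rfl⟩ := exists_unitary_mul_diagonal_exp_mul_unitary hA
  let F : ℂ → Matrix (Fin d) (Fin d) ℂ := fun z => U * diagonal (fun i => cexp (z * μ i)) * V
  have hF : ∀ i j, Differentiable ℂ fun z => F z i j := by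
    intro i j
    simp only [F, mul_apply (M := U * _), mul_diagonal]
    fun_prop
  have hfreq : ∃ᶠ z in 𝓝[≠] 0, Commute X (kroneckerPower n (F z)) :=
    frequently_nhdsNE_zero_of_forall_ofReal_mul_I fun t =>
      hX _ (mul_mem (mul_mem hU (diagonal_exp_mem_unitaryGroup μ t)) hV)
  simpa [F] using commute_kroneckerPower_of_frequently X hF hfreq 1

theorem commute_kroneckerPower_of_forall_unitary (X : Matrix (Fin n → Fin d) (Fin n → Fin d) ℂ)
    (hX : ∀ U ∈ unitaryGroup (Fin d) ℂ, Commute X (kroneckerPower n U))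
    (A : Matrix (Fin d) (Fin d) ℂ) : Commute X (kroneckerPower n A) := by
  have hF : ∀ i j, Differentiable ℂ fun z : ℂ => (A + z • 1) i j := by
    simp only [Matrix.add_apply, Matrix.smul_apply, smul_eq_mul]
    fun_prop
  have hfreq := ((A.eventually_isUnit_add_smul_one 0).mono fun z hz =>
    commute_kroneckerPower_of_isUnit X hX hz).frequently
  simpa using commute_kroneckerPower_of_frequently X hF hfreq 0

end

theorem stmt1_general (n d : ℕ) :
    (Submodule.span ℂ {M : Matrix (Fin n → Fin d) (Fin n → Fin d) ℂ |
        ∃ σ : Equiv.Perm (Fin n), M = permMatrix n d σ} : Set _) =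
      {X : Matrix (Fin n → Fin d) (Fin n → Fin d) ℂ |
        ∀ U ∈ Matrix.unitaryGroup (Fin d) ℂ,
          X * kroneckerPower n U = kroneckerPower n U * X} := by
  ext X
  constructor
  · intro hX U _
    refine (Commute.span_left ?_ X hX).eq
    rintro _ ⟨σ, rfl⟩
    exact permMatrix_commute_kroneckerPower σ U
  · intro hX
    have hperm : {M | ∃ σ, M = permMatrix n d σ} = Set.range (permMatrixRep n d) := by
      ext M
      exact exists_congr fun σ => eq_comm
    rw [SetLike.mem_coe, hperm]
    refine mem_span_range_of_forall_commute _ X fun Y hY => ?_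
    refine Commute.span_right ?_ Y (mem_span_kroneckerPower_of_forall_commute_permMatrix Y hY)
    rintro _ ⟨A, rfl⟩
    exact commute_kroneckerPower_of_forall_unitary X hX A

/-- Dual direction of Schur–Weyl duality: the span of the permutation matrices equals the
commutant of the `n`-th Kronecker powers of unitary matrices. -/
theorem stmt1 (n d : ℕ) (hn : 0 < n) (hd : 0 < d) :
    (Submodule.span ℂ {M : Matrix (Fin n → Fin d) (Fin n → Fin d) ℂ |
        ∃ σ : Equiv.Perm (Fin n), M = permMatrix n d σ} : Set _) =
      {X : Matrix (Fin n → Fin d) (Fin n → Fin d) ℂ |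
        ∀ U ∈ Matrix.unitaryGroup (Fin d) ℂ,
          X * kroneckerPower n U = kroneckerPower n U * X} :=
  stmt1_general n d
end

section
/- Let G be a finite group, m₁, m₂ positive integers, and ρ₁ : G →* unitaryGroup (Fin m₁) ℂ, ρ₂ : G →* unitaryGroup (Fin m₂) ℂ unitary representations that are inequivalent, i.e., the only matrix T ∈ Matrix (Fin m₁) (Fin m₂) ℂ with T · ρ₂(g) = ρ₁(g) · T for all g ∈ G is T = 0. Then for all indices i, j ∈ Fin m₁ and i', j' ∈ Fin m₂, Σ_{g ∈ G} (ρ₁(g))_{j i} · conj((ρ₂(g))_{j' i'}) = 0. (Orthogonality of matrix coefficients of inequivalent irreps, used to diagonalize the quantum Fourier transform over the symmetric group.) -/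
/-!
Averaging the matrix unit `E i i'` over the group gives `T = ∑ g, ρ₁ g * E i i' * ρ₂ g⁻¹`, which
intertwines `ρ₂` with `ρ₁` and hence vanishes by inequivalence. Since `ρ₂ g⁻¹ = (ρ₂ g)ᴴ` for a
unitary representation, the `(j, j')` entry of `T` is exactly the sum of matrix coefficients.
-/

open Matrix

theorem Matrix.mul_single_mul_apply {R l m n o : Type*} [Semiring R]
    [Fintype m] [Fintype n] [DecidableEq m] [DecidableEq n]
    (A : Matrix l m R) (B : Matrix n o R) (i : m) (i' : n) (c : R) (j : l) (j' : o) :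
    (A * single i i' c * B) j j' = A j i * c * B i' j' := by
  simp [mul_apply, single, ite_and]

theorem sum_mul_mul_inv_mul_eq_mul_sum {G R m n : Type*} [Group G] [Fintype G] [Semiring R]
    [Fintype m] [DecidableEq m] [Fintype n] [DecidableEq n]
    (ρ₁ : G →* Matrix m m R) (ρ₂ : G →* Matrix n n R) (X : Matrix m n R) (h : G) :
    (∑ g, ρ₁ g * X * ρ₂ g⁻¹) * ρ₂ h = ρ₁ h * ∑ g, ρ₁ g * X * ρ₂ g⁻¹ := by
  rw [Matrix.sum_mul, Matrix.mul_sum]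
  refine Fintype.sum_equiv (Equiv.mulLeft h⁻¹) _ _ fun g => ?_
  rw [Equiv.coe_mulLeft, _root_.mul_inv_rev, inv_inv, ← Matrix.mul_assoc, ← Matrix.mul_assoc,
    ← map_mul ρ₁, mul_inv_cancel_left, map_mul ρ₂, Matrix.mul_assoc _ (ρ₂ g⁻¹)]

theorem stmt4_general (G : Type*) [Group G] [Fintype G] (m₁ m₂ : ℕ)
    (ρ₁ : G →* Matrix.unitaryGroup (Fin m₁) ℂ)
    (ρ₂ : G →* Matrix.unitaryGroup (Fin m₂) ℂ)
    (hineq : ∀ T : Matrix (Fin m₁) (Fin m₂) ℂ,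
        (∀ g : G, T * (ρ₂ g : Matrix (Fin m₂) (Fin m₂) ℂ)
            = (ρ₁ g : Matrix (Fin m₁) (Fin m₁) ℂ) * T) → T = 0)
    (i j : Fin m₁) (i' j' : Fin m₂) :
    ∑ g : G, (ρ₁ g : Matrix (Fin m₁) (Fin m₁) ℂ) j i *
        (starRingEnd ℂ) ((ρ₂ g : Matrix (Fin m₂) (Fin m₂) ℂ) j' i') = 0 := by
  set σ₁ := (unitaryGroup (Fin m₁) ℂ).subtype.comp ρ₁
  set σ₂ := (unitaryGroup (Fin m₂) ℂ).subtype.comp ρ₂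
  have hT : ∑ g, σ₁ g * single i i' (1 : ℂ) * σ₂ g⁻¹ = 0 :=
    hineq _ (sum_mul_mul_inv_mul_eq_mul_sum σ₁ σ₂ (single i i' 1))
  have hinv (g : G) : σ₂ g⁻¹ = (σ₂ g)ᴴ := congrArg Subtype.val (map_inv ρ₂ g)
  simpa [σ₁, σ₂, Matrix.sum_apply, Matrix.mul_single_mul_apply, hinv] using
    congrFun (congrFun hT j) j'

/-- Orthogonality of matrix coefficients of inequivalent unitary representations of a
finite group. -/
theorem stmt4 (G : Type*) [Group G] [Fintype G] (m₁ m₂ : ℕ) (hm₁ : 0 < m₁) (hm₂ : 0 < m₂)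
    (ρ₁ : G →* Matrix.unitaryGroup (Fin m₁) ℂ)
    (ρ₂ : G →* Matrix.unitaryGroup (Fin m₂) ℂ)
    (hineq : ∀ T : Matrix (Fin m₁) (Fin m₂) ℂ,
        (∀ g : G, T * (ρ₂ g : Matrix (Fin m₂) (Fin m₂) ℂ)
            = (ρ₁ g : Matrix (Fin m₁) (Fin m₁) ℂ) * T) → T = 0)
    (i j : Fin m₁) (i' j' : Fin m₂) :
    ∑ g : G, (ρ₁ g : Matrix (Fin m₁) (Fin m₁) ℂ) j i *
        (starRingEnd ℂ) ((ρ₂ g : Matrix (Fin m₂) (Fin m₂) ℂ) j' i') = 0 :=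
  stmt4_general G m₁ m₂ ρ₁ ρ₂ hineq i j i' j'
end

section
/- Let G be a finite group, Λ a finite index type, and for each λ ∈ Λ let m_λ be a positive integer and ρ_λ : G →* unitaryGroup (Fin m_λ) ℂ a unitary representation such that: (i) each ρ_λ is irreducible (the only subspaces of ℂ^{m_λ} invariant under all ρ_λ(g) are 0 and ℂ^{m_λ}); (ii) for λ ≠ λ', ρ_λ and ρ_{λ'} are inequivalent (the only matrix T with T ρ_{λ'}(g) = ρ_λ(g) T for all g is T = 0); and (iii) Σ_{λ ∈ Λ} m_λ² = |G|. Then the linear map F from the space of functions x : G → ℂ to the product Π_{λ} Matrix (Fin m_λ) (Fin m_λ) ℂ defined by F(x)(λ)(i, j) = Σ_{σ ∈ G} √(m_λ/|G|) · x(σ) · (ρ_λ(σ))_{j i} is a bijective linear isometry: it preserves inner products, where the domain carries the inner product ⟨x, y⟩ = Σ_{σ} conj(x σ) · y σ and the codomain carries the sum over λ of Frobenius inner products ⟨M, N⟩ = Σ_{i,j} conj(M i j) · N i j. (Well-definedness and unitarity of the quantum Fourier transform over the symmetric group, Eqs. (7)–(8).) -/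
/-!
Averaging `ρ(σ) E ρ'(σ)*` over `G` turns any matrix `E` into an intertwiner from `ρ'` to `ρ`.
By Schur's lemma it vanishes when `ρ ≠ ρ'` are inequivalent and is a scalar, determined by its
trace, when `ρ = ρ'` is irreducible. Taking `E` to be a matrix unit gives the orthogonality
relations `∑ σ, ρ_λ(σ)_{ab} conj (ρ_λ'(σ)_{cd}) = δ_λλ' δ_ac δ_bd |G| / m_λ`, which say that the
adjoint `F*` of the Fourier transform is a right inverse of `F`. Since both sides have dimension
`∑ m_λ² = |G|`, `F` is bijective, so `F*` is also a left inverse: `F` is unitary.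
-/

open Matrix

namespace Matrix

variable {ι n p : Type*} [Fintype n] [DecidableEq n] [Fintype p] [DecidableEq p]

def IsIrreducibleFamily (A : ι → Matrix n n ℂ) : Prop :=
  ∀ W : Submodule ℂ (n → ℂ), (∀ k, ∀ v ∈ W, A k *ᵥ v ∈ W) → W = ⊥ ∨ W = ⊤

theorem IsIrreducibleFamily.exists_eq_smul_one [Nonempty n] {A : ι → Matrix n n ℂ}
    (hA : IsIrreducibleFamily A) {T : Matrix n n ℂ} (hT : ∀ k, T * A k = A k * T) :
    ∃ c : ℂ, T = c • 1 := by
  obtain ⟨c, hc⟩ := Module.End.exists_eigenvalue T.mulVecLin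
  have hinv : ∀ k, ∀ v ∈ Module.End.eigenspace T.mulVecLin c,
      A k *ᵥ v ∈ Module.End.eigenspace T.mulVecLin c := by
    intro k v hv
    rw [Module.End.mem_eigenspace_iff, mulVecLin_apply] at hv ⊢
    rw [mulVec_mulVec, hT, ← mulVec_mulVec, hv, mulVec_smul]
  refine ⟨c, ext_iff_mulVec.mpr fun v => ?_⟩
  have hv : v ∈ Module.End.eigenspace T.mulVecLin c := by
    rw [(hA _ hinv).resolve_left hc]
    trivial
  rw [smul_mulVec, one_mulVec]
  exact Module.End.mem_eigenspace_iff.mp hv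

variable {G : Type*} [Group G] [Fintype G]

def IsInequivalent (ρ₁ : G →* unitaryGroup n ℂ) (ρ₂ : G →* unitaryGroup p ℂ) : Prop :=
  ∀ T : Matrix n p ℂ, (∀ g, T * (ρ₂ g : Matrix p p ℂ) = (ρ₁ g : Matrix n n ℂ) * T) → T = 0

def intertwiningAverage (ρ₁ : G →* unitaryGroup n ℂ) (ρ₂ : G →* unitaryGroup p ℂ)
    (E : Matrix n p ℂ) : Matrix n p ℂ :=
  ∑ σ, (ρ₁ σ : Matrix n n ℂ) * E * star (ρ₂ σ : Matrix p p ℂ)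

theorem intertwiningAverage_mul (ρ₁ : G →* unitaryGroup n ℂ) (ρ₂ : G →* unitaryGroup p ℂ)
    (E : Matrix n p ℂ) (g : G) :
    intertwiningAverage ρ₁ ρ₂ E * (ρ₂ g : Matrix p p ℂ) =
      (ρ₁ g : Matrix n n ℂ) * intertwiningAverage ρ₁ ρ₂ E := by
  rw [intertwiningAverage, Matrix.sum_mul, Matrix.mul_sum]
  refine (Fintype.sum_equiv (Equiv.mulLeft g) _ _ fun σ => ?_).symm
  simp only [Equiv.coe_mulLeft, map_mul, Submonoid.coe_mul, star_mul, Matrix.mul_assoc,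
    UnitaryGroup.star_mul_self, Matrix.mul_one]

theorem intertwiningAverage_single_apply (ρ₁ : G →* unitaryGroup n ℂ)
    (ρ₂ : G →* unitaryGroup p ℂ) (a b : n) (c d : p) :
    intertwiningAverage ρ₁ ρ₂ (single b d 1) a c =
      ∑ σ, (ρ₁ σ : Matrix n n ℂ) a b * starRingEnd ℂ ((ρ₂ σ : Matrix p p ℂ) c d) := by
  simp [intertwiningAverage, Matrix.sum_apply, mul_apply, single, star_apply, ite_and,
    Finset.sum_ite_eq]

theorem IsInequivalent.sum_apply_mul_conj_apply {ρ₁ : G →* unitaryGroup n ℂ}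
    {ρ₂ : G →* unitaryGroup p ℂ} (h : IsInequivalent ρ₁ ρ₂) (a b : n) (c d : p) :
    ∑ σ, (ρ₁ σ : Matrix n n ℂ) a b * starRingEnd ℂ ((ρ₂ σ : Matrix p p ℂ) c d) = 0 := by
  rw [← intertwiningAverage_single_apply, h _ (intertwiningAverage_mul ρ₁ ρ₂ _)]
  rfl

theorem trace_mul_single_mul_star (U : unitaryGroup n ℂ) (b d : n) :
    trace ((U : Matrix n n ℂ) * single b d 1 * star (U : Matrix n n ℂ)) =
      if b = d then 1 else 0 := by
  rw [trace_mul_cycle, UnitaryGroup.star_mul_self, Matrix.one_mul]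
  split_ifs with hbd
  · rw [hbd, trace_single_eq_same]
  · exact trace_single_eq_of_ne _ _ _ hbd

theorem IsIrreducibleFamily.sum_apply_mul_conj_apply {ρ : G →* unitaryGroup n ℂ}
    (h : IsIrreducibleFamily fun g => (ρ g : Matrix n n ℂ)) (a b c d : n) :
    ∑ σ, (ρ σ : Matrix n n ℂ) a b * starRingEnd ℂ ((ρ σ : Matrix n n ℂ) c d) =
      if a = c ∧ b = d then (Fintype.card G : ℂ) / Fintype.card n else 0 := by
  have : Nonempty n := ⟨a⟩
  obtain ⟨μ, hμ⟩ := h.exists_eq_smul_one (intertwiningAverage_mul ρ ρ (single b d 1))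
  have htrace : μ * Fintype.card n = Fintype.card G * if b = d then 1 else 0 := by
    have := congrArg trace hμ
    rw [intertwiningAverage, trace_sum, Finset.sum_congr rfl fun σ _ =>
        trace_mul_single_mul_star (ρ σ) b d, trace_smul, trace_one, Finset.sum_const,
      Finset.card_univ, nsmul_eq_mul, smul_eq_mul] at this
    exact this.symm
  have hμ' : μ = Fintype.card G * (if b = d then 1 else 0) / Fintype.card n :=
    eq_div_of_mul_eq (Nat.cast_ne_zero.mpr Fintype.card_ne_zero) htrace
  rw [← intertwiningAverage_single_apply, hμ, smul_apply, one_apply, smul_eq_mul, hμ']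
  split_ifs <;> simp_all

end Matrix

theorem Fintype.sum_sum_sum_comm {α M X : Type*} [Fintype α] [Fintype X] [AddCommMonoid M]
    {β γ : α → Type*} [∀ a, Fintype (β a)] [∀ a, Fintype (γ a)]
    (f : (a : α) → β a → γ a → X → M) :
    ∑ a, ∑ b, ∑ c, ∑ x, f a b c x = ∑ x, ∑ a, ∑ b, ∑ c, f a b c x := by
  simp only [Finset.sum_comm (γ := X)]

theorem finrank_pi_matrix_fin {Λ : Type*} [Fintype Λ] (m : Λ → ℕ) :
    Module.finrank ℂ ((l : Λ) → Matrix (Fin (m l)) (Fin (m l)) ℂ) = ∑ l, m l ^ 2 := by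
  simp [Module.finrank_pi_fintype, Module.finrank_matrix, sq]

section FourierTransform

variable (G : Type*) [Fintype G] in
noncomputable def fourierWeight (k : ℕ) : ℂ := (√((k : ℝ) / Fintype.card G) : ℂ)

theorem conj_fourierWeight {G : Type*} [Fintype G] (k : ℕ) :
    starRingEnd ℂ (fourierWeight G k) = fourierWeight G k :=
  Complex.conj_ofReal _

theorem fourierWeight_mul_self_mul_div {G : Type*} [Fintype G] [Nonempty G] {k : ℕ}
    (hk : k ≠ 0) : fourierWeight G k * fourierWeight G k * (Fintype.card G / k) = 1 := by
  rw [fourierWeight, ← Complex.ofReal_mul, Real.mul_self_sqrt (by positivity)]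
  have : (Fintype.card G : ℂ) ≠ 0 := Nat.cast_ne_zero.mpr Fintype.card_ne_zero
  push_cast
  field_simp

variable {G : Type*} [Group G] [Fintype G] {Λ : Type*} {m : Λ → ℕ}
  (ρ : (l : Λ) → G →* unitaryGroup (Fin (m l)) ℂ)

noncomputable def fourierTransform :
    (G → ℂ) →ₗ[ℂ] ((l : Λ) → Matrix (Fin (m l)) (Fin (m l)) ℂ) :=
  Fintype.linearCombination ℂ fun σ l =>
    fourierWeight G (m l) • (ρ l σ : Matrix (Fin (m l)) (Fin (m l)) ℂ)ᵀ

theorem fourierTransform_apply (x : G → ℂ) (l : Λ) (i j : Fin (m l)) :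
    fourierTransform ρ x l i j =
      ∑ σ, fourierWeight G (m l) * x σ * (ρ l σ : Matrix (Fin (m l)) (Fin (m l)) ℂ) j i := by
  simp only [fourierTransform, Fintype.linearCombination_apply, Finset.sum_apply,
    Matrix.sum_apply, Pi.smul_apply, Matrix.smul_apply, transpose_apply, smul_eq_mul]
  exact Finset.sum_congr rfl fun σ _ => by ring

variable [Fintype Λ]

noncomputable def inverseFourierTransform (M : (l : Λ) → Matrix (Fin (m l)) (Fin (m l)) ℂ)
    (σ : G) : ℂ :=
  ∑ l, ∑ i, ∑ j, fourierWeight G (m l) * M l i j *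
    starRingEnd ℂ ((ρ l σ : Matrix (Fin (m l)) (Fin (m l)) ℂ) j i)

theorem sum_conj_fourierTransform_mul (x : G → ℂ)
    (M : (l : Λ) → Matrix (Fin (m l)) (Fin (m l)) ℂ) :
    ∑ l, ∑ i, ∑ j, starRingEnd ℂ (fourierTransform ρ x l i j) * M l i j =
      ∑ σ, starRingEnd ℂ (x σ) * inverseFourierTransform ρ M σ := by
  simp only [fourierTransform_apply, inverseFourierTransform, map_sum, map_mul,
    conj_fourierWeight, Finset.sum_mul, Finset.mul_sum]
  rw [Fintype.sum_sum_sum_comm]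
  exact Finset.sum_congr rfl fun σ _ => Finset.sum_congr rfl fun l _ =>
    Finset.sum_congr rfl fun i _ => Finset.sum_congr rfl fun j _ => by ring

variable {ρ}
variable (hirr : ∀ l, IsIrreducibleFamily fun g => (ρ l g : Matrix (Fin (m l)) (Fin (m l)) ℂ))
  (hineq : ∀ l l', l ≠ l' → IsInequivalent (ρ l) (ρ l'))
include hirr hineq

theorem fourierTransform_inverseFourierTransform
    (M : (l : Λ) → Matrix (Fin (m l)) (Fin (m l)) ℂ) :
    fourierTransform ρ (inverseFourierTransform ρ M) = M := by
  ext l a b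
  simp only [fourierTransform_apply, inverseFourierTransform, Finset.sum_mul, Finset.mul_sum]
  rw [← Fintype.sum_sum_sum_comm]
  have hcollect : ∀ l' a' b', ∑ σ, fourierWeight G (m l) *
      (fourierWeight G (m l') * M l' a' b' * starRingEnd ℂ ((ρ l' σ).1 b' a')) * (ρ l σ).1 b a =
      fourierWeight G (m l) * fourierWeight G (m l') * M l' a' b' *
        ∑ σ, (ρ l σ).1 b a * starRingEnd ℂ ((ρ l' σ).1 b' a') := fun l' a' b' => by
    rw [Finset.mul_sum]
    exact Finset.sum_congr rfl fun σ _ => by ring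
  simp only [hcollect]
  rw [Finset.sum_eq_single l]
  · simp only [(hirr l).sum_apply_mul_conj_apply, mul_ite, mul_zero, and_comm (a := b = _),
      ite_and, Finset.sum_ite_irrel, Finset.sum_const_zero, Finset.sum_ite_eq, Finset.mem_univ,
      if_true, Fintype.card_fin]
    linear_combination M l a b * fourierWeight_mul_self_mul_div (G := G) (Fin.pos a).ne'
  · intro l' _ hne
    simp [(hineq l l' hne.symm).sum_apply_mul_conj_apply]
  · simp

variable (hcard : ∑ l, m l ^ 2 = Fintype.card G)
include hcard

theorem fourierTransform_bijective : Function.Bijective (fourierTransform ρ) := by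
  have hsurj : Function.Surjective (fourierTransform ρ) := fun M =>
    ⟨_, fourierTransform_inverseFourierTransform hirr hineq M⟩
  refine ⟨(LinearMap.injective_iff_surjective_of_finrank_eq_finrank ?_).mpr hsurj, hsurj⟩
  rw [Module.finrank_fintype_fun_eq_card, finrank_pi_matrix_fin, hcard]

theorem sum_conj_fourierTransform_mul_fourierTransform (x y : G → ℂ) :
    ∑ l, ∑ i, ∑ j, starRingEnd ℂ (fourierTransform ρ x l i j) * fourierTransform ρ y l i j =
      ∑ σ, starRingEnd ℂ (x σ) * y σ := by
  have hleft : inverseFourierTransform ρ (fourierTransform ρ y) = y :=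
    (fourierTransform_bijective hirr hineq hcard).injective
      (fourierTransform_inverseFourierTransform hirr hineq _)
  rw [sum_conj_fourierTransform_mul, hleft]

end FourierTransform

theorem stmt5_general (G : Type*) [Group G] [Fintype G]
    (Λ : Type*) [Fintype Λ] (m : Λ → ℕ)
    (ρ : (l : Λ) → G →* Matrix.unitaryGroup (Fin (m l)) ℂ)
    (hirr : ∀ l : Λ, ∀ W : Submodule ℂ (Fin (m l) → ℂ),
        (∀ g : G, ∀ v ∈ W, Matrix.mulVec (ρ l g : Matrix (Fin (m l)) (Fin (m l)) ℂ) v ∈ W) →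
        W = ⊥ ∨ W = ⊤)
    (hineq : ∀ l l' : Λ, l ≠ l' →
        ∀ T : Matrix (Fin (m l)) (Fin (m l')) ℂ,
          (∀ g : G, T * (ρ l' g : Matrix (Fin (m l')) (Fin (m l')) ℂ)
              = (ρ l g : Matrix (Fin (m l)) (Fin (m l)) ℂ) * T) → T = 0)
    (hcard : ∑ l : Λ, (m l) ^ 2 = Fintype.card G)
    (F : (G → ℂ) → ((l : Λ) → Matrix (Fin (m l)) (Fin (m l)) ℂ))
    (hF : ∀ (x : G → ℂ) (l : Λ) (i j : Fin (m l)),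
        F x l i j = ∑ σ : G, (Real.sqrt ((m l : ℝ) / (Fintype.card G : ℝ)) : ℂ) * x σ *
          (ρ l σ : Matrix (Fin (m l)) (Fin (m l)) ℂ) j i) :
    IsLinearMap ℂ F ∧ Function.Bijective F ∧
      ∀ x y : G → ℂ,
        ∑ l : Λ, ∑ i : Fin (m l), ∑ j : Fin (m l),
            (starRingEnd ℂ) (F x l i j) * F y l i j =
          ∑ σ : G, (starRingEnd ℂ) (x σ) * y σ := by
  obtain rfl : F = fourierTransform ρ :=
    funext fun x => funext fun l => Matrix.ext fun i j =>
      (hF x l i j).trans (fourierTransform_apply ρ x l i j).symm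
  exact ⟨(fourierTransform ρ).isLinear, fourierTransform_bijective hirr hineq hcard,
    sum_conj_fourierTransform_mul_fourierTransform hirr hineq hcard⟩

/-- Well-definedness and unitarity of the quantum Fourier transform over a finite group:
given a complete family of pairwise inequivalent irreducible unitary representations whose
squared dimensions sum to `|G|`, the Fourier transform
`F(x)(λ)(i, j) = ∑ σ, √(m_λ/|G|) · x(σ) · (ρ_λ(σ))_{j i}` is a bijective linear map
preserving inner products. -/
theorem stmt5 (G : Type*) [Group G] [Fintype G]
    (Λ : Type*) [Fintype Λ] (m : Λ → ℕ) (hm : ∀ l, 0 < m l)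
    (ρ : (l : Λ) → G →* Matrix.unitaryGroup (Fin (m l)) ℂ)
    (hirr : ∀ l : Λ, ∀ W : Submodule ℂ (Fin (m l) → ℂ),
        (∀ g : G, ∀ v ∈ W, Matrix.mulVec (ρ l g : Matrix (Fin (m l)) (Fin (m l)) ℂ) v ∈ W) →
        W = ⊥ ∨ W = ⊤)
    (hineq : ∀ l l' : Λ, l ≠ l' →
        ∀ T : Matrix (Fin (m l)) (Fin (m l')) ℂ,
          (∀ g : G, T * (ρ l' g : Matrix (Fin (m l')) (Fin (m l')) ℂ)
              = (ρ l g : Matrix (Fin (m l)) (Fin (m l)) ℂ) * T) → T = 0)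
    (hcard : ∑ l : Λ, (m l) ^ 2 = Fintype.card G)
    (F : (G → ℂ) → ((l : Λ) → Matrix (Fin (m l)) (Fin (m l)) ℂ))
    (hF : ∀ (x : G → ℂ) (l : Λ) (i j : Fin (m l)),
        F x l i j = ∑ σ : G, (Real.sqrt ((m l : ℝ) / (Fintype.card G : ℝ)) : ℂ) * x σ *
          (ρ l σ : Matrix (Fin (m l)) (Fin (m l)) ℂ) j i) :
    IsLinearMap ℂ F ∧ Function.Bijective F ∧
      ∀ x y : G → ℂ,
        ∑ l : Λ, ∑ i : Fin (m l), ∑ j : Fin (m l),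
            (starRingEnd ℂ) (F x l i j) * F y l i j =
          ∑ σ : G, (starRingEnd ℂ) (x σ) * y σ :=
  stmt5_general G Λ m ρ hirr hineq hcard F hF
end

section
/- Let r, d be positive integers, μ the Haar probability measure on the compact group unitaryGroup (Fin r) ℂ, B a complex Banach space, and F : Matrix (Fin r) (Fin d) ℂ → B a continuous function. If M₁, M₂ ∈ Matrix (Fin r) (Fin d) ℂ satisfy M₁ᴴ · M₁ = M₂ᴴ · M₂, then ∫ F(U · M₁) dμ(U) = ∫ F(U · M₂) dμ(U). (Well-definedness of the uniform distribution over the set of purifications Pur(ρ) used in Theorem 1: Haar-averaged quantities do not depend on the chosen base purification.) -/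
/-!
If `M₁ᴴ M₁ = M₂ᴴ M₂` then `M₁ x ↦ M₂ x` is a well-defined isometry from the range of `M₁`,
which extends to a unitary `W` with `W M₁ = M₂`. A Haar probability measure on a (necessarily
compact) group is also right invariant, by uniqueness of Haar probability measures, so the
substitution `U ↦ U W` identifies the two averages.
-/

open Matrix MeasureTheory

open scoped InnerProductSpace

section

variable {𝕜 V W : Type*} [RCLike 𝕜] [AddCommGroup V] [Module 𝕜 V]
  [NormedAddCommGroup W] [InnerProductSpace 𝕜 W] [FiniteDimensional 𝕜 W]

theorem LinearMap.exists_linearIsometryEquiv_comp_eq_of_norm_eq (S T : V →ₗ[𝕜] W)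
    (h : ∀ x, ‖S x‖ = ‖T x‖) : ∃ f : W ≃ₗᵢ[𝕜] W, ∀ x, f (S x) = T x := by
  have hker : ker S ≤ ker T := fun x hx => by
    rw [mem_ker, ← norm_eq_zero, ← h, norm_eq_zero, ← mem_ker]
    exact hx
  let L₀ : range S →ₗ[𝕜] W := (ker S).liftQ T hker ∘ₗ S.quotKerEquivRange.symm.toLinearMap
  have hL₀ (x : V) : L₀ ⟨S x, mem_range_self S x⟩ = T x := by
    simp [L₀, quotKerEquivRange_symm_apply_image]
  let L : range S →ₗᵢ[𝕜] W := ⟨L₀, by rintro ⟨_, x, rfl⟩; rw [hL₀, ← h]; rfl⟩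
  refine ⟨L.extend.toLinearIsometryEquiv rfl, fun x => ?_⟩
  exact (L.extend_apply ⟨S x, mem_range_self S x⟩).trans (hL₀ x)

end

namespace Matrix

variable {m n 𝕜 : Type*} [RCLike 𝕜] [Fintype m] [DecidableEq m] [Fintype n] [DecidableEq n]

theorem inner_toEuclideanLin_toEuclideanLin (A : Matrix m n 𝕜) (x y : EuclideanSpace 𝕜 n) :
    ⟪toEuclideanLin A x, toEuclideanLin A y⟫_𝕜 = ⟪x, toEuclideanLin (Aᴴ * A) y⟫_𝕜 := by
  rw [toLpLin_mul_same, LinearMap.comp_apply, toEuclideanLin_conjTranspose_eq_adjoint,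
    LinearMap.adjoint_inner_right]

theorem exists_mem_unitaryGroup_mul_eq_of_conjTranspose_mul_self_eq {A B : Matrix m n 𝕜}
    (h : Aᴴ * A = Bᴴ * B) : ∃ U ∈ unitaryGroup m 𝕜, U * A = B := by
  obtain ⟨f, hf⟩ := (toEuclideanLin A).exists_linearIsometryEquiv_comp_eq_of_norm_eq
    (toEuclideanLin B) fun x => by
      rw [norm_eq_sqrt_re_inner (𝕜 := 𝕜), norm_eq_sqrt_re_inner (𝕜 := 𝕜),
        inner_toEuclideanLin_toEuclideanLin, inner_toEuclideanLin_toEuclideanLin, h]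
  set U := (toEuclideanCLM (n := m) (𝕜 := 𝕜)).symm f with hU
  refine ⟨U, Unitary.map_mem _ (Unitary.linearIsometryEquiv.symm f).prop, ?_⟩
  have hUf : toEuclideanLin U = (f : EuclideanSpace 𝕜 m →ₗ[𝕜] EuclideanSpace 𝕜 m) := by
    rw [← coe_toEuclideanCLM_eq_toEuclideanLin, hU, StarAlgEquiv.apply_symm_apply]
    rfl
  refine toEuclideanLin.injective (LinearMap.ext fun x => ?_)
  rw [toLpLin_mul_same, LinearMap.comp_apply, hUf]
  exact hf x

instance : CompactSpace (unitaryGroup n 𝕜) := by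
  refine isCompact_iff_compactSpace.mp <|
    (isCompact_univ_pi fun _ => isCompact_univ_pi fun _ => isCompact_closedBall (0 : 𝕜) 1)
      |>.of_isClosed_subset (isClosed_unitary (R := Matrix n n 𝕜)) fun U hU => ?_
  simp only [Set.mem_univ_pi, Metric.mem_closedBall, dist_zero_right]
  exact entry_norm_bound_of_unitary hU

end Matrix

theorem MeasureTheory.Measure.isMulRightInvariant_of_isProbabilityMeasure {G : Type*} [Group G]
    [TopologicalSpace G] [IsTopologicalGroup G] [LocallyCompactSpace G] [MeasurableSpace G]
    [BorelSpace G] (μ : Measure G) [μ.IsHaarMeasure] [IsProbabilityMeasure μ] :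
    μ.IsMulRightInvariant where
  map_mul_right_eq_self g := by
    have : IsProbabilityMeasure (μ.map (· * g)) :=
      isProbabilityMeasure_map (measurable_mul_const g).aemeasurable
    exact isHaarMeasure_eq_of_isProbabilityMeasure _ μ

theorem stmt7_general (r d : ℕ)
    [MeasurableSpace (Matrix.unitaryGroup (Fin r) ℂ)]
    [BorelSpace (Matrix.unitaryGroup (Fin r) ℂ)]
    (μ : Measure (Matrix.unitaryGroup (Fin r) ℂ))
    [μ.IsHaarMeasure] [IsProbabilityMeasure μ]
    (B : Type*) [NormedAddCommGroup B] [NormedSpace ℂ B]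
    (F : Matrix (Fin r) (Fin d) ℂ → B)
    (M₁ M₂ : Matrix (Fin r) (Fin d) ℂ)
    (h : M₁ᴴ * M₁ = M₂ᴴ * M₂) :
    ∫ U : Matrix.unitaryGroup (Fin r) ℂ, F ((U : Matrix (Fin r) (Fin r) ℂ) * M₁) ∂μ =
      ∫ U : Matrix.unitaryGroup (Fin r) ℂ, F ((U : Matrix (Fin r) (Fin r) ℂ) * M₂) ∂μ := by
  obtain ⟨W, hW, rfl⟩ := exists_mem_unitaryGroup_mul_eq_of_conjTranspose_mul_self_eq h
  have := μ.isMulRightInvariant_of_isProbabilityMeasure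
  simp_rw [← Matrix.mul_assoc]
  exact (integral_mul_right_eq_self
    (fun U : unitaryGroup (Fin r) ℂ => F ((U : Matrix (Fin r) (Fin r) ℂ) * M₁)) ⟨W, hW⟩).symm

/-- Well-definedness of the uniform distribution over purifications: Haar averages of a
continuous function over the unitary orbit do not depend on the chosen base purification. -/
theorem stmt7 (r d : ℕ) (hr : 0 < r) (hd : 0 < d)
    [MeasurableSpace (Matrix.unitaryGroup (Fin r) ℂ)]
    [BorelSpace (Matrix.unitaryGroup (Fin r) ℂ)]
    (μ : Measure (Matrix.unitaryGroup (Fin r) ℂ))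
    [μ.IsHaarMeasure] [IsProbabilityMeasure μ]
    (B : Type*) [NormedAddCommGroup B] [NormedSpace ℂ B] [CompleteSpace B]
    (F : Matrix (Fin r) (Fin d) ℂ → B) (hF : Continuous F)
    (M₁ M₂ : Matrix (Fin r) (Fin d) ℂ)
    (h : M₁ᴴ * M₁ = M₂ᴴ * M₂) :
    ∫ U : Matrix.unitaryGroup (Fin r) ℂ, F ((U : Matrix (Fin r) (Fin r) ℂ) * M₁) ∂μ =
      ∫ U : Matrix.unitaryGroup (Fin r) ℂ, F ((U : Matrix (Fin r) (Fin r) ℂ) * M₂) ∂μ :=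
  stmt7_general r d μ B F M₁ M₂ h
end

section
/- Let e, o be positive integers and X a complex square matrix indexed by (Fin e × Fin o). Then the trace norm of the partial trace over the first factor is bounded by the trace norm of X: ‖Tr_E X‖₁ ≤ ‖X‖₁. (The data-processing inequality for the trace norm under partial trace, used in the proof of Theorem 5 to discard the environment systems.) -/
open Matrix ComplexOrder

/-- The trace norm of a complex square matrix: the trace of the positive semidefinite
square root of `AᴴA` (i.e. the sum of the singular values of `A`), as a real number. -/
noncomputable def traceNorm {m : Type*} [Fintype m] [DecidableEq m]
    (A : Matrix m m ℂ) : ℝ :=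
  (((Matrix.posSemidef_conjTranspose_mul_self A).1.eigenvectorUnitary.1 *
      diagonal (((↑) : ℝ → ℂ) ∘ (√·) ∘ (Matrix.posSemidef_conjTranspose_mul_self A).1.eigenvalues) *
      (star (Matrix.posSemidef_conjTranspose_mul_self A).1.eigenvectorUnitary :
        Matrix m m ℂ)).trace).re

/-- The partial trace over the first (environment) tensor factor. -/
noncomputable def partialTraceE {e o : ℕ} (X : Matrix (Fin e × Fin o) (Fin e × Fin o) ℂ) :
    Matrix (Fin o) (Fin o) ℂ :=
  fun j j' => ∑ i : Fin e, X (i, j) (i, j')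

/-! The trace norm is the maximum of `Re Tr (B A)` over contractions `B` (`B Bᴴ ≤ 1`): the bound
follows from Cauchy–Schwarz on the columns of `A V` and `Bᴴ V`, where `V` diagonalises `AᴴA`,
and it is attained at `B = (AᴴA)^(-1/2) Aᴴ`. Since `Tr (B (Tr_E X)) = Tr ((1 ⊗ B) X)` and
`1 ⊗ B` is again a contraction, every value of the variational problem for `Tr_E X` is a value
of the one for `X`. -/

open scoped Kronecker MatrixOrder

namespace Matrix

variable {l m n 𝕜 : Type*} [RCLike 𝕜]

theorem norm_conjTranspose_mul_apply_self_le [Fintype m] (X Y : Matrix m n 𝕜) (i : n) :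
    ‖(Xᴴ * Y) i i‖ ≤ √(RCLike.re ((Xᴴ * X) i i)) * √(RCLike.re ((Yᴴ * Y) i i)) := by
  have hcol (Z W : Matrix m n 𝕜) : (Zᴴ * W) i i =
      inner 𝕜 (WithLp.toLp 2 (fun k => Z k i)) (WithLp.toLp 2 (fun k => W k i)) := by
    simp [mul_apply, EuclideanSpace.inner_toLp_toLp, dotProduct, mul_comm]
  rw [hcol, hcol, hcol, ← norm_eq_sqrt_re_inner, ← norm_eq_sqrt_re_inner]
  exact norm_inner_le_norm _ _

theorem re_apply_self_le_one_of_le_one [DecidableEq n] {M : Matrix n n 𝕜} (h : M ≤ 1) (i : n) :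
    RCLike.re (M i i) ≤ 1 := by
  have := (RCLike.nonneg_iff.mp ((le_iff.mp h).diag_nonneg (i := i))).1
  simpa [sub_apply] using this

theorem one_kronecker_mul_conjTranspose_le_one [Fintype l] [DecidableEq l] [Fintype n]
    [DecidableEq n] {B : Matrix n n 𝕜} (hB : B * Bᴴ ≤ 1) :
    (1 ⊗ₖ B : Matrix (l × n) (l × n) 𝕜) * (1 ⊗ₖ B)ᴴ ≤ 1 := by
  have hsub : (1 : Matrix (l × n) (l × n) 𝕜) - 1 ⊗ₖ (B * Bᴴ) = 1 ⊗ₖ (1 - B * Bᴴ) := by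
    rw [← one_kronecker_one, sub_eq_iff_eq_add, ← kronecker_add, sub_add_cancel]
  rw [le_iff, conjTranspose_kronecker, conjTranspose_one, ← mul_kronecker_mul, Matrix.one_mul,
    hsub]
  exact PosSemidef.one.kronecker (le_iff.mp hB)

end Matrix

section TraceNorm

variable {n : Type*} [Fintype n] [DecidableEq n]

theorem traceNorm_eq_sum_sqrt_eigenvalues (A : Matrix n n ℂ) :
    traceNorm A = ∑ i, √((isHermitian_conjTranspose_mul_self A).eigenvalues i) := by
  rw [traceNorm, trace_mul_cycle, Unitary.coe_star_mul_self, one_mul, trace_diagonal,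
    Complex.re_sum]
  rfl

theorem traceNorm_eq_re_trace_cfc_sqrt (A : Matrix n n ℂ) :
    traceNorm A = (cfc Real.sqrt (Aᴴ * A)).trace.re := by
  rw [(isHermitian_conjTranspose_mul_self A).cfc_eq, IsHermitian.cfc, Unitary.conjStarAlgAut_apply]
  rfl

theorem re_trace_mul_le_traceNorm (A B : Matrix n n ℂ) (hB : B * Bᴴ ≤ 1) :
    (B * A).trace.re ≤ traceNorm A := by
  set hH := isHermitian_conjTranspose_mul_self A
  set V : Matrix n n ℂ := ↑hH.eigenvectorUnitary
  have hVV : V * star V = 1 := Unitary.coe_mul_star_self _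
  have hgram (X Y : Matrix n n ℂ) : (X * V)ᴴ * (Y * V) = star V * (Xᴴ * Y) * V := by
    simp only [conjTranspose_mul, star_eq_conjTranspose, Matrix.mul_assoc]
  have htrace : (B * A).trace = ((Bᴴ * V)ᴴ * (A * V)).trace := by
    rw [hgram, conjTranspose_conjTranspose, trace_mul_cycle, hVV, one_mul]
  have hAV (i : n) : RCLike.re (((A * V)ᴴ * (A * V)) i i) = hH.eigenvalues i := by
    rw [hgram, ← Unitary.conjStarAlgAut_star_apply (S := ℂ),
      hH.conjStarAlgAut_star_eigenvectorUnitary]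
    simp
  have hBV (i : n) : RCLike.re (((Bᴴ * V)ᴴ * (Bᴴ * V)) i i) ≤ 1 := by
    refine re_apply_self_le_one_of_le_one ?_ i
    rw [hgram, conjTranspose_conjTranspose, ← Unitary.coe_star_mul_self hH.eigenvectorUnitary]
    simpa only [Matrix.mul_one] using star_left_conjugate_le_conjugate hB V
  rw [htrace, traceNorm_eq_sum_sqrt_eigenvalues, trace, Complex.re_sum]
  refine Finset.sum_le_sum fun i _ => ?_
  calc (((Bᴴ * V)ᴴ * (A * V)) i i).re
      ≤ ‖((Bᴴ * V)ᴴ * (A * V)) i i‖ := Complex.re_le_norm _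
    _ ≤ √(RCLike.re (((Bᴴ * V)ᴴ * (Bᴴ * V)) i i)) * √(RCLike.re (((A * V)ᴴ * (A * V)) i i)) :=
      norm_conjTranspose_mul_apply_self_le _ _ i
    _ ≤ √(hH.eigenvalues i) := by
      rw [hAV]
      exact mul_le_of_le_one_left (Real.sqrt_nonneg _) (Real.sqrt_le_one.mpr (hBV i))

theorem exists_re_trace_mul_eq_traceNorm (A : Matrix n n ℂ) :
    ∃ B : Matrix n n ℂ, B * Bᴴ ≤ 1 ∧ (B * A).trace.re = traceNorm A := by
  have hH : IsSelfAdjoint (Aᴴ * A) := isHermitian_conjTranspose_mul_self A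
  have hmul (f g : ℝ → ℝ) :
      cfc f (Aᴴ * A) * cfc g (Aᴴ * A) = cfc (fun x => f x * g x) (Aᴴ * A) :=
    (cfc_mul f g _ (finite_real_spectrum.continuousOn _) (finite_real_spectrum.continuousOn _)).symm
  -- Since `0⁻¹ = 0`, this is the pseudo-inverse of `√(AᴴA)`, and `(√x)⁻¹ * x = √x` for all `x`.
  set S := cfc (fun x : ℝ => (√x)⁻¹) (Aᴴ * A)
  have hS : Sᴴ = S := (cfc_predicate (p := IsSelfAdjoint) _ _ : IsSelfAdjoint S)
  have hSH : S * (Aᴴ * A) = cfc Real.sqrt (Aᴴ * A) := by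
    conv_lhs => rw [← cfc_id' ℝ (Aᴴ * A)]
    simp_rw [S, hmul, inv_mul_eq_div, Real.div_sqrt]
  refine ⟨S * Aᴴ, ?_, ?_⟩
  · have hgram : S * Aᴴ * (S * Aᴴ)ᴴ = S * (Aᴴ * A) * S := by
      rw [conjTranspose_mul, conjTranspose_conjTranspose, hS]
      simp only [Matrix.mul_assoc]
    rw [hgram, hSH, hmul]
    exact cfc_le_one _ _ fun x _ => mul_inv_le_one
  · rw [Matrix.mul_assoc, hSH, traceNorm_eq_re_trace_cfc_sqrt]

end TraceNorm

theorem trace_one_kronecker_mul_eq_trace_mul_partialTraceE {e o : ℕ}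
    (B : Matrix (Fin o) (Fin o) ℂ) (X : Matrix (Fin e × Fin o) (Fin e × Fin o) ℂ) :
    ((1 ⊗ₖ B) * X).trace = (B * partialTraceE X).trace := by
  have hdiag (i : Fin e) (j : Fin o) :
      (((1 : Matrix (Fin e) (Fin e) ℂ) ⊗ₖ B) * X) (i, j) (i, j) = ∑ k, B j k * X (i, k) (i, j) := by
    simp [mul_apply, one_apply, Fintype.sum_prod_type, ite_mul]
  simp only [trace, diag, Fintype.sum_prod_type, hdiag, mul_apply, partialTraceE, Finset.mul_sum]
  rw [Finset.sum_comm]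
  exact Finset.sum_congr rfl fun j _ => Finset.sum_comm

theorem stmt13_general (e o : ℕ)
    (X : Matrix (Fin e × Fin o) (Fin e × Fin o) ℂ) :
    traceNorm (partialTraceE X) ≤ traceNorm X := by
  obtain ⟨B, hB, hBtr⟩ := exists_re_trace_mul_eq_traceNorm (partialTraceE X)
  calc traceNorm (partialTraceE X) = ((1 ⊗ₖ B) * X).trace.re := by
        rw [trace_one_kronecker_mul_eq_trace_mul_partialTraceE, hBtr]
    _ ≤ traceNorm X := re_trace_mul_le_traceNorm X _ (one_kronecker_mul_conjTranspose_le_one hB)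

/-- Data-processing inequality for the trace norm under partial trace. -/
theorem stmt13 (e o : ℕ) (he : 0 < e) (ho : 0 < o)
    (X : Matrix (Fin e × Fin o) (Fin e × Fin o) ℂ) :
    traceNorm (partialTraceE X) ≤ traceNorm X :=
  stmt13_general e o X
end

section
/- Let d_I, d_O, r be positive integers and K, L : Fin r → Matrix (Fin d_O) (Fin d_I) ℂ two families of Kraus operators representing the same linear map: Σ_{e} K_e · X · K_eᴴ = Σ_{e} L_e · X · L_eᴴ for all X ∈ Matrix (Fin d_I) (Fin d_I) ℂ. Then there exists a unitary u ∈ unitaryGroup (Fin r) ℂ such that L_e = Σ_{f} u(e, f) • K_f for all e ∈ Fin r. (Unitary freedom of Kraus/Stinespring representations with environment of fixed dimension r, which makes the set Dil(Λ) of Theorem 2 a single orbit of the unitary group U(r) acting on the environment.) -/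
/-!
Stack the vectorised Kraus operators as the rows of an `r × (d_O d_I)` matrix `V_K`. Evaluating
the hypothesis on the matrix units shows that `V_Kᴴ V_K = V_Lᴴ V_L` (both are the Choi matrix of
the map). Two matrices with the same Gram matrix differ by a unitary factor on the left:
`V_K x` and `V_L x` always have the same norm, so `V_K x ↦ V_L x` is a well-defined isometry on
the range of `V_K`, and it extends to a unitary of `ℂ^r`.
-/

open Matrix
open scoped InnerProductSpace

theorem LinearMap.exists_linearIsometry_comp_eq_of_norm_eq {𝕜 U V : Type*} [RCLike 𝕜]
    [AddCommGroup U] [Module 𝕜 U] [NormedAddCommGroup V] [InnerProductSpace 𝕜 V]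
    [FiniteDimensional 𝕜 V] (S T : U →ₗ[𝕜] V) (h : ∀ x, ‖S x‖ = ‖T x‖) :
    ∃ Φ : V →ₗᵢ[𝕜] V, ∀ x, Φ (S x) = T x := by
  have hker : LinearMap.ker S ≤ LinearMap.ker T := fun x hx => by
    simpa [← norm_eq_zero, ← h] using hx
  let f : LinearMap.range S →ₗ[𝕜] V :=
    (LinearMap.ker S).liftQ T hker ∘ₗ S.quotKerEquivRange.symm
  have hf : ∀ x, f ⟨S x, S.mem_range_self x⟩ = T x := fun x => by simp [f]
  let φ : LinearMap.range S →ₗᵢ[𝕜] V := ⟨f, by rintro ⟨-, x, rfl⟩; simp [hf, h]⟩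
  exact ⟨φ.extend, fun x => (φ.extend_apply ⟨S x, S.mem_range_self x⟩).trans (hf x)⟩

section Gram

variable {𝕜 m n : Type*} [RCLike 𝕜] [Fintype m] [DecidableEq m] [Fintype n] [DecidableEq n]

theorem Matrix.inner_toEuclideanLin_toEuclideanLin_s15 (A : Matrix m n 𝕜)
    (x y : EuclideanSpace 𝕜 n) :
    ⟪toEuclideanLin A x, toEuclideanLin A y⟫_𝕜 = ⟪x, toEuclideanLin (Aᴴ * A) y⟫_𝕜 := by
  rw [toLpLin_mul_same, toEuclideanLin_conjTranspose_eq_adjoint, LinearMap.comp_apply,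
    LinearMap.adjoint_inner_right]

theorem Matrix.exists_mem_unitaryGroup_mul_eq_of_conjTranspose_mul_self_eq_s15
    {A B : Matrix m n 𝕜} (h : Aᴴ * A = Bᴴ * B) : ∃ U ∈ unitaryGroup m 𝕜, U * A = B := by
  have hnorm : ∀ x, ‖toEuclideanLin A x‖ = ‖toEuclideanLin B x‖ := fun x => by
    rw [@norm_eq_sqrt_re_inner 𝕜, @norm_eq_sqrt_re_inner 𝕜,
      inner_toEuclideanLin_toEuclideanLin_s15, inner_toEuclideanLin_toEuclideanLin_s15, h]
  obtain ⟨Φ, hΦ⟩ := (toEuclideanLin A).exists_linearIsometry_comp_eq_of_norm_eq _ hnorm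
  have hU : toEuclideanLin (toEuclideanLin.symm Φ.toLinearMap) = Φ.toLinearMap :=
    LinearEquiv.apply_symm_apply _ _
  refine ⟨toEuclideanLin.symm Φ.toLinearMap, ?_, ?_⟩
  · rw [mem_unitaryGroup_iff', star_eq_conjTranspose]
    apply toEuclideanLin.injective
    rw [toLpLin_mul_same, toEuclideanLin_conjTranspose_eq_adjoint, hU, toLpLin_one]
    exact Φ.adjoint_comp_self'
  · apply toEuclideanLin.injective
    ext1 x
    rw [toLpLin_mul_same, hU, LinearMap.comp_apply]
    exact hΦ x

end Gram

section KrausFamily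

variable {ι m n R : Type*}

def Matrix.vecRows (K : ι → Matrix m n R) : Matrix ι (n × m) R :=
  of fun e => (K e).vec

theorem Matrix.vecRows_injective : Function.Injective (vecRows : (ι → Matrix m n R) → _) :=
  fun _ _ h => funext fun e => vec_inj.mp (congrFun h e)

theorem Matrix.vecRows_mul {ι' : Type*} [Fintype ι] [Semiring R] (u : Matrix ι' ι R)
    (K : ι → Matrix m n R) : u * vecRows K = vecRows fun e => ∑ f, u e f • K f := by
  ext e ⟨j, i⟩
  simp [vecRows, mul_apply, sum_apply]

theorem Matrix.sum_mul_single_one_mul_conjTranspose_apply [Fintype ι] [Fintype n]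
    [DecidableEq n] [CommSemiring R] [StarRing R] (K : ι → Matrix m n R) (i k : m) (j l : n) :
    (∑ e, K e * single j l (1 : R) * (K e)ᴴ) i k = ((vecRows K)ᴴ * vecRows K) (l, k) (j, i) := by
  simp [vecRows, mul_apply, sum_apply, single_apply, ite_and, mul_comm]

end KrausFamily

theorem stmt15_general (d_I d_O r : ℕ)
    (K L : Fin r → Matrix (Fin d_O) (Fin d_I) ℂ)
    (h : ∀ X : Matrix (Fin d_I) (Fin d_I) ℂ,
        ∑ e : Fin r, K e * X * (K e)ᴴ = ∑ e : Fin r, L e * X * (L e)ᴴ) :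
    ∃ u ∈ Matrix.unitaryGroup (Fin r) ℂ,
      ∀ e : Fin r, L e = ∑ f : Fin r, u e f • K f := by
  have hGram : (vecRows K)ᴴ * vecRows K = (vecRows L)ᴴ * vecRows L := by
    ext ⟨l, k⟩ ⟨j, i⟩
    rw [← sum_mul_single_one_mul_conjTranspose_apply, h, sum_mul_single_one_mul_conjTranspose_apply]
  obtain ⟨u, hu, huK⟩ := exists_mem_unitaryGroup_mul_eq_of_conjTranspose_mul_self_eq_s15 hGram
  rw [vecRows_mul] at huK
  exact ⟨u, hu, fun e => congrFun (vecRows_injective huK).symm e⟩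

/-- Unitary freedom of Kraus representations: two families of `r` Kraus operators
representing the same linear map are related by an `r × r` unitary matrix. -/
theorem stmt15 (d_I d_O r : ℕ) (hI : 0 < d_I) (hO : 0 < d_O) (hr : 0 < r)
    (K L : Fin r → Matrix (Fin d_O) (Fin d_I) ℂ)
    (h : ∀ X : Matrix (Fin d_I) (Fin d_I) ℂ,
        ∑ e : Fin r, K e * X * (K e)ᴴ = ∑ e : Fin r, L e * X * (L e)ᴴ) :
    ∃ u ∈ Matrix.unitaryGroup (Fin r) ℂ,
      ∀ e : Fin r, L e = ∑ f : Fin r, u e f • K f :=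
  stmt15_general d_I d_O r K L h
end
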